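/- Let Y¹ and Y⁰ be independent random variables, each exponentially distributed with rate 1, let τ¹ be the honest random time on [s,t] associated with the intensity λ1 and driven by Y¹, and let τ⁰ be the honest random time on [s,t] associated with the intensity λ0 and driven by Y⁰. Then the events {τ⁰ = τ¹} and {τ⁰ = s and τ¹ = s} agree up to a set of probability zero, and P(τ⁰ = τ¹) = exp(-∫_s^t (λ0(u) + λ1(u)) du). -/

import Mathlib

/-!
Write `Λ(r) = ∫_r^t λ`. For `y ≥ 0` the honest time is the least `r ∈ [s,t]` with
`Λ(r) ≤ y`; it equals `s` iff `Λ(s) ≤ y`, and otherwise `Λ(τ) = y` by continuity of `Λ`.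
So if `τ⁰ = τ¹` while not both equal `s`, then `Y⁰ = Λ₀(τ¹)` is a measurable function of
`Y¹`, an event of probability zero because `Y⁰` is independent of `Y¹` and has an atomless
law. Hence `P(τ⁰ = τ¹) = P(Y⁰ ≥ Λ₀(s), Y¹ ≥ Λ₁(s)) = exp (-Λ₀(s)) exp (-Λ₁(s))`.
-/

open MeasureTheory ProbabilityTheory Real

/-- The honest random time on `[s,t]` associated with the intensity `lam`,
driven by the value `y`: `max (s, inf {r ∈ [s,t] : ∫_r^t lam ≤ y})`. -/
noncomputable def honestTime (s t : ℝ) (lam : ℝ → ℝ) (y : ℝ) : ℝ :=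
  max s (sInf {r | r ∈ Set.Icc s t ∧ ∫ u in r..t, lam u ≤ y})

lemma continuous_intervalIntegral_left {lam : ℝ → ℝ} (hlam : Continuous lam) (t : ℝ) :
    Continuous fun r : ℝ => ∫ u in r..t, lam u :=
  (intervalIntegral.continuous_primitive (fun a b => hlam.intervalIntegrable a b) t).neg.congr
    fun r => (intervalIntegral.integral_symm t r).symm

section HonestTime

variable {s t y : ℝ} {lam : ℝ → ℝ}

lemma honestTime_isLeast (hst : s ≤ t) (hlam : Continuous lam) (hy : 0 ≤ y) :
    IsLeast {r | r ∈ Set.Icc s t ∧ ∫ u in r..t, lam u ≤ y} (honestTime s t lam y) := by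
  set S := {r | r ∈ Set.Icc s t ∧ ∫ u in r..t, lam u ≤ y}
  have hne : S.Nonempty := ⟨t, ⟨hst, le_rfl⟩, by rwa [intervalIntegral.integral_same]⟩
  have hbdd : BddBelow S := ⟨s, fun r hr => hr.1.1⟩
  have hclosed : IsClosed S :=
    isClosed_Icc.inter (isClosed_Iic.preimage (continuous_intervalIntegral_left hlam t))
  have hval : honestTime s t lam y = sInf S := max_eq_right (le_csInf hne fun r hr => hr.1.1)
  exact hval ▸ ⟨hclosed.csInf_mem hne hbdd, fun r hr => csInf_le hbdd hr⟩

lemma honestTime_eq_left_iff (hst : s ≤ t) (hlam : Continuous lam) (hy : 0 ≤ y) :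
    honestTime s t lam y = s ↔ ∫ u in s..t, lam u ≤ y := by
  obtain ⟨⟨hmem, hint⟩, hleast⟩ := honestTime_isLeast hst hlam hy
  exact ⟨fun h => h ▸ hint, fun h => le_antisymm (hleast ⟨⟨le_rfl, hst⟩, h⟩) hmem.1⟩

lemma integral_honestTime_eq (hst : s ≤ t) (hlam : Continuous lam) (hy : 0 ≤ y)
    (hne : honestTime s t lam y ≠ s) :
    ∫ u in honestTime s t lam y..t, lam u = y := by
  obtain ⟨⟨hmem, hint⟩, hleast⟩ := honestTime_isLeast hst hlam hy
  set τ := honestTime s t lam y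
  have hsτ : s < τ := lt_of_le_of_ne hmem.1 (Ne.symm hne)
  have hlim : Filter.Tendsto (fun r => ∫ u in r..t, lam u) (nhdsWithin τ (Set.Iio τ))
      (nhds (∫ u in τ..t, lam u)) :=
    ((continuous_intervalIntegral_left hlam t).tendsto τ).mono_left nhdsWithin_le_nhds
  refine le_antisymm hint (ge_of_tendsto hlim ?_)
  -- just left of `τ` the integral exceeds `y`, by minimality of `τ`
  filter_upwards [Ioo_mem_nhdsLT hsτ] with r hr
  by_contra! hlt
  exact (hleast ⟨⟨hr.1.le, hr.2.le.trans hmem.2⟩, hlt.le⟩).not_gt hr.2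

lemma antitone_honestTime_max_zero (hst : s ≤ t) (hlam : Continuous lam) :
    Antitone fun y => honestTime s t lam (max y 0) := by
  intro a b hab
  obtain ⟨⟨hmem, hint⟩, -⟩ := honestTime_isLeast hst hlam (le_max_right a 0)
  exact (honestTime_isLeast hst hlam (le_max_right b 0)).2
    ⟨hmem, hint.trans (max_le_max hab le_rfl)⟩

lemma honestTime_eq_honestTime_iff {lam' : ℝ → ℝ} {y' : ℝ} (hst : s ≤ t)
    (hlam : Continuous lam) (hy : 0 ≤ y) (hne : y ≠ ∫ u in honestTime s t lam' y'..t, lam u) :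
    honestTime s t lam y = honestTime s t lam' y' ↔
      honestTime s t lam y = s ∧ honestTime s t lam' y' = s := by
  refine ⟨fun h => ?_, fun h => h.1.trans h.2.symm⟩
  by_contra hboth
  have hτ : honestTime s t lam y ≠ s := fun h₀ => hboth ⟨h₀, h ▸ h₀⟩
  exact hne (h ▸ integral_honestTime_eq hst hlam hy hτ).symm

end HonestTime

instance nullSingletonClass_expMeasure (r : ℝ) : NullSingletonClass (expMeasure r) := by
  unfold expMeasure gammaMeasure
  infer_instance

lemma expMeasure_Iio_zero {r : ℝ} (hr : 0 < r) : expMeasure r (Set.Iio 0) = 0 := by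
  have := isProbabilityMeasure_expMeasure hr
  rw [measure_congr Iio_ae_eq_Iic, ← ofReal_cdf, cdf_expMeasure_eq hr, if_pos le_rfl]
  simp

lemma expMeasure_Ici {r c : ℝ} (hr : 0 < r) (hc : 0 ≤ c) :
    expMeasure r (Set.Ici c) = ENNReal.ofReal (exp (-(r * c))) := by
  have := isProbabilityMeasure_expMeasure hr
  rw [← Set.compl_Iio, prob_compl_eq_one_sub measurableSet_Iio, measure_congr Iio_ae_eq_Iic,
    ← ofReal_cdf, cdf_expMeasure_eq hr, if_pos hc, ← ENNReal.ofReal_one,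
    ← ENNReal.ofReal_sub _ (sub_nonneg.mpr (exp_le_one_iff.mpr (by nlinarith))), sub_sub_cancel]

lemma ae_nonneg_of_map_eq_expMeasure {Ω : Type*} [MeasurableSpace Ω] {P : Measure Ω}
    {Y : Ω → ℝ} {r : ℝ} (hr : 0 < r) (hY : AEMeasurable Y P)
    (hlaw : P.map Y = expMeasure r) :
    ∀ᵐ ω ∂P, 0 ≤ Y ω := by
  refine ae_of_ae_map hY ?_
  rw [hlaw, ae_iff]
  exact measure_mono_null (fun x hx => not_le.mp hx) (expMeasure_Iio_zero hr)

lemma measure_preimage_Ici_of_map_eq_expMeasure {Ω : Type*} [MeasurableSpace Ω] {P : Measure Ω}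
    {Y : Ω → ℝ} {r c : ℝ} (hr : 0 < r) (hc : 0 ≤ c) (hY : Measurable Y)
    (hlaw : P.map Y = expMeasure r) :
    P (Y ⁻¹' Set.Ici c) = ENNReal.ofReal (exp (-(r * c))) := by
  rw [← Measure.map_apply hY measurableSet_Ici, hlaw, expMeasure_Ici hr hc]

lemma ProbabilityTheory.IndepFun.measure_eq_comp_eq_zero {Ω α β : Type*} [MeasurableSpace Ω]
    [MeasurableSpace α] [MeasurableSpace β] [MeasurableEq β] {P : Measure Ω} [IsFiniteMeasure P]
    {X : Ω → α} {Y : Ω → β} (hX : AEMeasurable X P) (hY : AEMeasurable Y P)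
    (hXY : IndepFun X Y P) [NullSingletonClass (P.map Y)] {f : α → β} (hf : Measurable f) :
    P {ω | Y ω = f (X ω)} = 0 := by
  have hgraph : MeasurableSet {p : α × β | p.2 = f p.1} :=
    measurableSet_eq_fun measurable_snd (hf.comp measurable_fst)
  rw [← Set.preimage_ofPred_eq (p := fun p : α × β => p.2 = f p.1)
      (f := fun ω => (X ω, Y ω)),
    ← Measure.map_apply_of_aemeasurable (hX.prodMk hY) hgraph,
    hXY.map_prod_eq_prod_map_map hX hY, Measure.prod_apply hgraph]
  simp [Set.preimage]

lemma honestTime_diagonal_ae_eq {Ω : Type*} [MeasurableSpace Ω] {P : Measure Ω}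
    [IsFiniteMeasure P] {s t : ℝ} {lam0 lam1 : ℝ → ℝ} {Y0 Y1 : Ω → ℝ} (hst : s ≤ t)
    (hlam0 : Continuous lam0) (hlam1 : Continuous lam1) (hY1 : AEMeasurable Y1 P)
    (hY0 : AEMeasurable Y0 P) (hindep : IndepFun Y1 Y0 P) [NullSingletonClass (P.map Y0)]
    (hY0_nonneg : ∀ᵐ ω ∂P, 0 ≤ Y0 ω) (hY1_nonneg : ∀ᵐ ω ∂P, 0 ≤ Y1 ω) :
    {ω | honestTime s t lam0 (Y0 ω) = honestTime s t lam1 (Y1 ω)} =ᵐ[P]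
      {ω | honestTime s t lam0 (Y0 ω) = s ∧ honestTime s t lam1 (Y1 ω) = s} := by
  have hoff_graph :
      ∀ᵐ ω ∂P, Y0 ω ≠ ∫ u in honestTime s t lam1 (max (Y1 ω) 0)..t, lam0 u := by
    refine ae_iff.mpr ?_
    simpa only [ne_eq, not_not, Function.comp_apply] using hindep.measure_eq_comp_eq_zero hY1 hY0
      ((continuous_intervalIntegral_left hlam0 t).measurable.comp
        (antitone_honestTime_max_zero hst hlam1).measurable)
  filter_upwards [hY0_nonneg, hY1_nonneg, hoff_graph] with ω h0 h1 hω
  rw [max_eq_left h1] at hω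
  exact propext (honestTime_eq_honestTime_iff hst hlam0 h0 hω)

theorem diagonal_event_general
    {Ω : Type*} [MeasurableSpace Ω] (P : Measure Ω) [IsProbabilityMeasure P]
    (s t : ℝ) (hst : s < t)
    (lam0 lam1 : ℝ → ℝ) (hlam0 : Continuous lam0) (hlam1 : Continuous lam1)
    (hlam0_nonneg : ∀ u ∈ Set.Icc s t, 0 ≤ lam0 u)
    (hlam1_nonneg : ∀ u ∈ Set.Icc s t, 0 ≤ lam1 u)
    (Y1 Y0 : Ω → ℝ) (hY1 : Measurable Y1) (hY0 : Measurable Y0)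
    (hY1law : P.map Y1 = expMeasure 1) (hY0law : P.map Y0 = expMeasure 1)
    (hindep : IndepFun Y1 Y0 P) :
    P (symmDiff {ω | honestTime s t lam0 (Y0 ω) = honestTime s t lam1 (Y1 ω)}
        {ω | honestTime s t lam0 (Y0 ω) = s ∧ honestTime s t lam1 (Y1 ω) = s}) = 0
    ∧ P {ω | honestTime s t lam0 (Y0 ω) = honestTime s t lam1 (Y1 ω)}
        = ENNReal.ofReal (Real.exp (-(∫ u in s..t, (lam0 u + lam1 u)))) := by
  set c0 := ∫ u in s..t, lam0 u
  set c1 := ∫ u in s..t, lam1 u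
  have hY0_nonneg := ae_nonneg_of_map_eq_expMeasure one_pos hY0.aemeasurable hY0law
  have hY1_nonneg := ae_nonneg_of_map_eq_expMeasure one_pos hY1.aemeasurable hY1law
  have : NullSingletonClass (P.map Y0) := hY0law ▸ nullSingletonClass_expMeasure 1
  have hdiag := honestTime_diagonal_ae_eq hst.le hlam0 hlam1 hY1.aemeasurable hY0.aemeasurable
    hindep hY0_nonneg hY1_nonneg
  have hcorner : {ω | honestTime s t lam0 (Y0 ω) = s ∧ honestTime s t lam1 (Y1 ω) = s} =ᵐ[P]
      (Y0 ⁻¹' Set.Ici c0 ∩ Y1 ⁻¹' Set.Ici c1 : Set Ω) := by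
    filter_upwards [hY0_nonneg, hY1_nonneg] with ω h0 h1
    exact propext (and_congr (honestTime_eq_left_iff hst.le hlam0 h0)
      (honestTime_eq_left_iff hst.le hlam1 h1))
  have hc0 : 0 ≤ c0 := intervalIntegral.integral_nonneg hst.le hlam0_nonneg
  have hc1 : 0 ≤ c1 := intervalIntegral.integral_nonneg hst.le hlam1_nonneg
  refine ⟨measure_symmDiff_eq_zero_iff.mpr hdiag, ?_⟩
  calc _ = P (Y0 ⁻¹' Set.Ici c0 ∩ Y1 ⁻¹' Set.Ici c1) := measure_congr (hdiag.trans hcorner)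
    _ = P (Y0 ⁻¹' Set.Ici c0) * P (Y1 ⁻¹' Set.Ici c1) :=
      hindep.symm.measure_inter_preimage_eq_mul _ _ measurableSet_Ici measurableSet_Ici
    _ = ENNReal.ofReal (exp (-(1 * c0))) * ENNReal.ofReal (exp (-(1 * c1))) := by
      rw [measure_preimage_Ici_of_map_eq_expMeasure one_pos hc0 hY0 hY0law,
        measure_preimage_Ici_of_map_eq_expMeasure one_pos hc1 hY1 hY1law]
    _ = _ := by
      rw [← ENNReal.ofReal_mul (exp_nonneg _), ← exp_add,
        intervalIntegral.integral_add (hlam0.intervalIntegrable _ _) (hlam1.intervalIntegrable _ _)]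
      congr 2
      ring

/-- With `τ¹`, `τ⁰` the honest times on `[s,t]` associated with `λ₁`, `λ₀`, driven by
independent `Exp(1)` random variables, the events `{τ⁰ = τ¹}` and `{τ⁰ = s ∧ τ¹ = s}`
agree up to a set of probability zero, and
`P(τ⁰ = τ¹) = exp (-∫_s^t (λ₀(u) + λ₁(u)) du)`. -/
theorem diagonal_event
    {Ω : Type*} [MeasurableSpace Ω] (P : Measure Ω) [IsProbabilityMeasure P]
    (s t : ℝ) (hs : 0 ≤ s) (hst : s < t)
    (lam0 lam1 : ℝ → ℝ) (hlam0 : Continuous lam0) (hlam1 : Continuous lam1)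
    (hlam0_nonneg : ∀ u ∈ Set.Icc s t, 0 ≤ lam0 u)
    (hlam1_nonneg : ∀ u ∈ Set.Icc s t, 0 ≤ lam1 u)
    (Y1 Y0 : Ω → ℝ) (hY1 : Measurable Y1) (hY0 : Measurable Y0)
    (hY1law : P.map Y1 = expMeasure 1) (hY0law : P.map Y0 = expMeasure 1)
    (hindep : IndepFun Y1 Y0 P) :
    P (symmDiff {ω | honestTime s t lam0 (Y0 ω) = honestTime s t lam1 (Y1 ω)}
        {ω | honestTime s t lam0 (Y0 ω) = s ∧ honestTime s t lam1 (Y1 ω) = s}) = 0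
    ∧ P {ω | honestTime s t lam0 (Y0 ω) = honestTime s t lam1 (Y1 ω)}
        = ENNReal.ofReal (Real.exp (-(∫ u in s..t, (lam0 u + lam1 u)))) :=
  diagonal_event_general P s t hst lam0 lam1 hlam0 hlam1 hlam0_nonneg hlam1_nonneg Y1 Y0 hY1 hY0
    hY1law hY0law hindep
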